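/- Under the sequence setup below, if the Global Clipping Rule (GCR) holds at step t, then the combined first-order error and second-order bias satisfy η·⟨Z^t − Z̄^t, E^t⟩_F + ⟨Z̄^t, Z̄^{t+1} − Z̄^t⟩_F + η²·‖(1/n)𝟙𝟙ᵀE^t‖_F² ≤ η·Σ_{e∈S^t}‖(C_hᵀZ^t)_{e,:}‖₂². -/

import Mathlib

open Finset

/-- Euclidean norm of a row vector in `ℝ^d`. -/
noncomputable def rnorm {d : ℕ} (x : Fin d → ℝ) : ℝ :=
  Real.sqrt (∑ k, (x k) ^ 2)

/-- `clip(x; τ)`: projection of `x` onto the Euclidean ball of radius `τ`. -/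
noncomputable def clipVec {d : ℕ} (τ : ℝ) (x : Fin d → ℝ) : Fin d → ℝ :=
  if rnorm x ≤ τ then x else (τ / rnorm x) • x

/-- Row-wise clipping of a matrix. -/
noncomputable def clipMat {E : Type*} {d : ℕ} (τ : ℝ) (M : Matrix E (Fin d) ℝ) :
    Matrix E (Fin d) ℝ :=
  Matrix.of fun e => clipVec τ (M e)

/-- Frobenius inner product. -/
noncomputable def frobIP {V : Type*} [Fintype V] {d : ℕ} (M N : Matrix V (Fin d) ℝ) : ℝ :=
  ∑ v, ∑ k, M v k * N v k

/-- Frobenius norm. -/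
noncomputable def frobNorm {V : Type*} [Fintype V] {d : ℕ} (M : Matrix V (Fin d) ℝ) : ℝ :=
  Real.sqrt (∑ v, ∑ k, (M v k) ^ 2)

section Helpers

lemma rnorm_eq_norm {d : ℕ} (x : Fin d → ℝ) :
    rnorm x = ‖(WithLp.toLp 2 x : EuclideanSpace ℝ (Fin d))‖ := by
  rw [EuclideanSpace.norm_eq]
  simp [rnorm, sq_abs]

lemma rnorm_nonneg {d : ℕ} (x : Fin d → ℝ) : 0 ≤ rnorm x := Real.sqrt_nonneg _

lemma sq_rnorm {d : ℕ} (x : Fin d → ℝ) : rnorm x ^ 2 = ∑ k, (x k) ^ 2 := by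
  rw [rnorm, Real.sq_sqrt]; positivity

lemma rnorm_smul {d : ℕ} (c : ℝ) (x : Fin d → ℝ) : rnorm (c • x) = |c| * rnorm x := by
  rw [rnorm_eq_norm, rnorm_eq_norm]
  rw [WithLp.toLp_smul, norm_smul, Real.norm_eq_abs]

lemma rnorm_eq_zero {d : ℕ} {x : Fin d → ℝ} (h : rnorm x = 0) : x = 0 := by
  have hnn : (0:ℝ) ≤ ∑ k, (x k)^2 := by positivity
  have h2 : ∑ k, (x k) ^ 2 = 0 := by
    have h3 : ∑ k, (x k)^2 ≤ 0 := Real.sqrt_eq_zero'.mp h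
    linarith
  funext k
  have := (Finset.sum_eq_zero_iff_of_nonneg (fun i _ => sq_nonneg (x i))).mp h2 k
    (Finset.mem_univ k)
  exact pow_eq_zero_iff (by norm_num) |>.mp this

lemma rnorm_zero {d : ℕ} : rnorm (0 : Fin d → ℝ) = 0 := by simp [rnorm]

lemma rnorm_add_le {d : ℕ} (x y : Fin d → ℝ) : rnorm (x + y) ≤ rnorm x + rnorm y := by
  simp only [rnorm_eq_norm]
  rw [WithLp.toLp_add]; exact norm_add_le _ _

lemma rnorm_sum_le {d : ℕ} {E : Type*} (s : Finset E) (f : E → Fin d → ℝ) :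
    rnorm (∑ e ∈ s, f e) ≤ ∑ e ∈ s, rnorm (f e) := by
  simp only [rnorm_eq_norm]
  simpa [WithLp.toLp_sum] using norm_sum_le s (fun e => (WithLp.toLp 2 (f e) : EuclideanSpace ℝ (Fin d)))

lemma inner_le_rnorm {d : ℕ} (a b : Fin d → ℝ) : ∑ k, a k * b k ≤ rnorm a * rnorm b := by
  have := real_inner_le_norm (WithLp.toLp 2 a : EuclideanSpace ℝ (Fin d))
    (WithLp.toLp 2 b : EuclideanSpace ℝ (Fin d))
  rw [PiLp.inner_apply] at this
  simp only [RCLike.inner_apply, conj_trivial] at this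
  rw [rnorm_eq_norm, rnorm_eq_norm]
  simpa [mul_comm] using this

lemma clip_inner {d : ℕ} {τ : ℝ} (hτ : 0 ≤ τ) (x : Fin d → ℝ) :
    ∑ k, x k * (x k - clipVec τ x k) =
      if τ < rnorm x then rnorm x ^ 2 - τ * rnorm x else 0 := by
  unfold clipVec
  by_cases h : rnorm x ≤ τ
  · simp [h, not_lt.mpr h]
  · have hlt : τ < rnorm x := not_le.mp h
    have hr : 0 < rnorm x := lt_of_le_of_lt hτ hlt
    rw [if_neg h, if_pos hlt]
    simp only [Pi.smul_apply, smul_eq_mul]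
    have : ∀ k, x k * (x k - τ / rnorm x * x k) = (1 - τ / rnorm x) * (x k)^2 := by
      intro k; ring
    rw [Finset.sum_congr rfl (fun k _ => this k), ← Finset.mul_sum, ← sq_rnorm]
    field_simp

lemma frobIP_mul {V E : Type*} [Fintype V] [Fintype E] {d : ℕ}
    (A : Matrix V E ℝ) (Z : Matrix V (Fin d) ℝ) (M : Matrix E (Fin d) ℝ) :
    frobIP Z (A * M) = frobIP (A.transpose * Z) M := by
  unfold frobIP
  simp only [Matrix.mul_apply, Matrix.transpose_apply]
  calc ∑ v, ∑ k, Z v k * ∑ e, A v e * M e k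
      = ∑ v, ∑ k, ∑ e, A v e * Z v k * M e k := by
        refine Finset.sum_congr rfl fun v _ => Finset.sum_congr rfl fun k _ => ?_
        rw [Finset.mul_sum]; exact Finset.sum_congr rfl fun e _ => by ring
    _ = ∑ v, ∑ e, ∑ k, A v e * Z v k * M e k :=
        Finset.sum_congr rfl fun v _ => Finset.sum_comm
    _ = ∑ e, ∑ v, ∑ k, A v e * Z v k * M e k := Finset.sum_comm
    _ = ∑ e, ∑ k, ∑ v, A v e * Z v k * M e k :=
        Finset.sum_congr rfl fun e _ => Finset.sum_comm
    _ = ∑ e, ∑ k, (∑ v, A v e * Z v k) * M e k := by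
        refine Finset.sum_congr rfl fun e _ => Finset.sum_congr rfl fun k _ => ?_
        rw [Finset.sum_mul]

lemma frobIP_add_right {V : Type*} [Fintype V] {d : ℕ} (M N P : Matrix V (Fin d) ℝ) :
    frobIP M (N + P) = frobIP M N + frobIP M P := by
  simp [frobIP, Matrix.add_apply, mul_add, Finset.sum_add_distrib]

lemma frobIP_smul_right {V : Type*} [Fintype V] {d : ℕ} (c : ℝ) (M N : Matrix V (Fin d) ℝ) :
    frobIP M (c • N) = c * frobIP M N := by
  simp only [frobIP, Matrix.smul_apply, Finset.mul_sum, smul_eq_mul]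
  refine Finset.sum_congr rfl fun v _ => Finset.sum_congr rfl fun k _ => by ring

lemma frobIP_sub_left {V : Type*} [Fintype V] {d : ℕ} (M N P : Matrix V (Fin d) ℝ) :
    frobIP (M - N) P = frobIP M P - frobIP N P := by
  simp [frobIP, Matrix.sub_apply, sub_mul, Finset.sum_sub_distrib]

end Helpers

open scoped Classical in
/-- Joint control of the first-order error and second-order bias under the GCR at step t. -/
theorem gcr_joint_error_bias_control
    {d : ℕ} (hd : 1 ≤ d)
    {V Eh Eb : Type*} [Fintype V] [Fintype Eh] [Fintype Eb]
    [Nonempty V] [Nonempty Eh] [Nonempty Eb] [DecidableEq V]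
    -- each column of `C_h` sums to zero
    (Ch : Matrix V Eh ℝ) (hCh : ∀ e, ∑ v, Ch v e = 0)
    -- each column of `C_b` is a standard basis vector of `ℝ^V`
    (Cb : Matrix V Eb ℝ)
    (hCb : ∀ e, ∃ v₀, ∀ v, Cb v e = if v = v₀ then (1 : ℝ) else 0)
    -- `μ` bounds the quadratic form of `L_h = C_h C_hᵀ`
    (μ : ℝ) (hμ : 0 < μ)
    (hμL : ∀ w : V → ℝ, ∑ v, w v * ((Ch * Ch.transpose).mulVec w) v ≤ μ * ∑ v, (w v) ^ 2)
    -- `Δ ∈ [0,1)` bounds the Byzantine amplification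
    (Δ : ℝ) (hΔ0 : 0 ≤ Δ) (hΔ1 : Δ < 1)
    (hΔ : ∀ U : Matrix Eb (Fin d) ℝ, (∀ e, rnorm (U e) ≤ 1) →
      ∃ W : Matrix Eh (Fin d) ℝ,
        Ch * W = ((1 : Matrix V V ℝ)
            - (1 / (Fintype.card V : ℝ)) • Matrix.of (fun _ _ => (1 : ℝ))) * (Cb * U)
          ∧ ∀ e, rnorm (W e) ≤ Δ)
    -- step size, thresholds, Byzantine matrices and iterates
    (η : ℝ) (hη : 0 < η)
    (τ : ℕ → ℝ) (hτ : ∀ t, 0 ≤ τ t)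
    (U : ℕ → Matrix Eb (Fin d) ℝ) (hU : ∀ t e, rnorm (U t e) ≤ 1)
    (Z : ℕ → Matrix V (Fin d) ℝ)
    (hZ0 : ∀ k, ∑ v, Z 0 v k = 0)
    (hZrec : ∀ t, Z (t + 1) =
      Z t - η • (Ch * clipMat (τ t) (Ch.transpose * Z t)) + (η * τ t) • (Cb * U t))
    -- `S t` is the set of clipped honest edges at step `t`
    (S : ℕ → Finset Eh)
    (hS : ∀ t, S t = Finset.univ.filter (fun e => τ t < rnorm ((Ch.transpose * Z t) e)))
    -- a fixed step `t` at which the Global Clipping Rule holds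
    (t : ℕ)
    (hGCRt : τ t = 0 ∨
      ∑ e ∈ S t, rnorm ((Ch.transpose * Z t) e) ≥
        Δ * ∑ e, rnorm ((Ch.transpose * Z t) e)
          + (η * (Fintype.card Eb : ℝ) ^ 2 / (Fintype.card V : ℝ)) *
              ∑ s ∈ Finset.range (t + 1), τ s)
    -- the error term and the averages
    (Err : Matrix V (Fin d) ℝ)
    (hErr : Err = Ch * (Ch.transpose * Z t - clipMat (τ t) (Ch.transpose * Z t))
      + τ t • (Cb * U t))
    (Zbar : ℕ → Matrix V (Fin d) ℝ)
    (hZbar : ∀ s, Zbar s = Matrix.of fun _ k => (1 / (Fintype.card V : ℝ)) * ∑ w, Z s w k)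
    (Ebar : Matrix V (Fin d) ℝ)
    (hEbar : Ebar = Matrix.of fun _ k => (1 / (Fintype.card V : ℝ)) * ∑ w, Err w k) :
    η * frobIP (Z t - Zbar t) Err
      + frobIP (Zbar t) (Zbar (t + 1) - Zbar t)
      + η ^ 2 * frobIP Ebar Ebar ≤
        η * ∑ e ∈ S t, (rnorm ((Ch.transpose * Z t) e)) ^ 2 := by
  have hn : (0:ℝ) < (Fintype.card V : ℝ) := by exact_mod_cast Fintype.card_pos
  have hmb : (0:ℝ) < (Fintype.card Eb : ℝ) := by exact_mod_cast Fintype.card_pos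
  set n : ℝ := (Fintype.card V : ℝ) with hn_def
  set mb : ℝ := (Fintype.card Eb : ℝ) with hmb_def
  set X : Matrix Eh (Fin d) ℝ := Ch.transpose * Z t with hX_def
  clear_value n mb X
  -- column sums of Cb are 1
  choose v0 hv0 using hCb
  have colCb : ∀ e, ∑ v, Cb v e = 1 := by
    intro e
    simp [hv0 e, Finset.sum_ite_eq']
  have colCh : ∀ (M : Matrix Eh (Fin d) ℝ) (k : Fin d), ∑ v, (Ch * M) v k = 0 := by
    intro M k
    simp only [Matrix.mul_apply]
    rw [Finset.sum_comm]
    refine Finset.sum_eq_zero fun e _ => ?_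
    rw [← Finset.sum_mul, hCh e, zero_mul]
  have colCbM : ∀ (M : Matrix Eb (Fin d) ℝ) (k : Fin d), ∑ v, (Cb * M) v k = ∑ e, M e k := by
    intro M k
    simp only [Matrix.mul_apply]
    rw [Finset.sum_comm]
    refine Finset.sum_congr rfl fun e _ => ?_
    rw [← Finset.sum_mul, colCb e, one_mul]
  -- column sums of Err and of the iterates
  have FErrcol : ∀ k, ∑ v, Err v k = τ t * ∑ e, U t e k := by
    intro k
    rw [hErr]
    simp only [Matrix.add_apply, Matrix.smul_apply, smul_eq_mul]
    rw [Finset.sum_add_distrib, colCh _ k, ← Finset.mul_sum, colCbM _ k, zero_add]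
  have FZsum : ∀ s k, ∑ v, Z (s+1) v k = ∑ v, Z s v k + (η * τ s) * ∑ e, U s e k := by
    intro s k
    rw [hZrec s]
    simp only [Matrix.add_apply, Matrix.sub_apply, Matrix.smul_apply, smul_eq_mul]
    rw [Finset.sum_add_distrib, Finset.sum_sub_distrib, ← Finset.mul_sum, ← Finset.mul_sum,
      colCh _ k, colCbM _ k]
    ring
  have FcU : ∀ s, rnorm (∑ e : Eb, U s e) ≤ mb := by
    intro s
    refine le_trans (rnorm_sum_le Finset.univ fun e => U s e) ?_
    calc ∑ e, rnorm (U s e) ≤ ∑ _e : Eb, (1:ℝ) := Finset.sum_le_sum fun e _ => hU s e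
      _ = mb := by simp [hmb_def]
  have Fa : ∀ s, rnorm (fun k => ∑ v, Z s v k) ≤ η * mb * ∑ i ∈ Finset.range s, τ i := by
    intro s
    induction s with
    | zero =>
      have hz : (fun k => ∑ v, Z 0 v k) = (0 : Fin d → ℝ) := funext fun k => hZ0 k
      simp [hz, rnorm_zero]
    | succ s ih =>
      have hfn : (fun k => ∑ v, Z (s+1) v k)
          = (fun k => ∑ v, Z s v k) + (η * τ s) • (∑ e : Eb, U s e) := by
        funext k
        simp only [Pi.add_apply, Pi.smul_apply, Finset.sum_apply, smul_eq_mul]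
        rw [FZsum s k, Finset.sum_apply k Finset.univ (fun e : Eb => (U s e : Fin d → ℝ))]
      rw [hfn]
      calc rnorm _
          ≤ rnorm (fun k => ∑ v, Z s v k) + rnorm ((η * τ s) • (∑ e : Eb, U s e)) :=
            rnorm_add_le _ _
        _ ≤ η * mb * ∑ i ∈ Finset.range s, τ i + (η * τ s) * mb := by
            have h1 : rnorm ((η * τ s) • (∑ e : Eb, U s e)) ≤ (η * τ s) * mb := by
              rw [rnorm_smul, abs_of_nonneg (mul_nonneg hη.le (hτ s))]
              exact mul_le_mul_of_nonneg_left (FcU s) (mul_nonneg hη.le (hτ s))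
            linarith
        _ = η * mb * ∑ i ∈ Finset.range (s+1), τ i := by
            rw [Finset.sum_range_succ]; ring
  -- H1: the averaged recursion
  have H1 : Zbar (t+1) - Zbar t = η • Ebar := by
    ext v k
    simp only [Matrix.sub_apply, Matrix.smul_apply, hZbar, hEbar, Matrix.of_apply,
      smul_eq_mul]
    rw [FZsum t k, FErrcol k]
    ring
  -- H2: inner products with the averaged matrices agree
  have H2 : frobIP (Zbar t) Ebar = frobIP (Zbar t) Err := by
    rw [hZbar, hEbar]
    unfold frobIP
    simp only [Matrix.of_apply]
    rw [Finset.sum_comm]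
    conv_rhs => rw [Finset.sum_comm]
    refine Finset.sum_congr rfl fun k _ => ?_
    rw [Finset.sum_const, ← Finset.mul_sum, nsmul_eq_mul]
    have hcard : ((Finset.univ : Finset V).card : ℝ) = n := by
      simp [hn_def]
    rw [hcard]
    field_simp
  have H3 : η * frobIP (Z t - Zbar t) Err + frobIP (Zbar t) (Zbar (t+1) - Zbar t)
      = η * frobIP (Z t) Err := by
    rw [H1, frobIP_smul_right, frobIP_sub_left, H2]
    ring
  -- H4: second-order bias bound
  have H4 : frobIP Ebar Ebar ≤ τ t ^ 2 * mb ^ 2 / n := by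
    have hfe : frobIP Ebar Ebar
        = n * ∑ k, ((1/n) * (τ t * ∑ e, U t e k)) ^ 2 := by
      rw [hEbar]
      unfold frobIP
      simp only [Matrix.of_apply]
      rw [Finset.sum_comm]
      rw [Finset.mul_sum]
      refine Finset.sum_congr rfl fun k _ => ?_
      rw [Finset.sum_const, nsmul_eq_mul, FErrcol k]
      have hcard : ((Finset.univ : Finset V).card : ℝ) = n := by simp [hn_def]
      rw [hcard]
      ring
    have hsq : ∑ k, (∑ e, U t e k) ^ 2 ≤ mb ^ 2 := by
      have h1 : rnorm (∑ e : Eb, U t e) ^ 2 ≤ mb ^ 2 := by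
        have := FcU t
        nlinarith [rnorm_nonneg (∑ e : Eb, U t e)]
      rw [sq_rnorm] at h1
      calc ∑ k, (∑ e, U t e k) ^ 2 = ∑ k, ((∑ e : Eb, U t e) k) ^ 2 := by
            refine Finset.sum_congr rfl fun k _ => ?_
            rw [Finset.sum_apply k Finset.univ (fun e : Eb => (U t e : Fin d → ℝ))]
        _ ≤ mb ^ 2 := h1
    rw [hfe]
    have hexp : n * ∑ k, ((1/n) * (τ t * ∑ e, U t e k)) ^ 2
        = (τ t ^ 2 / n) * ∑ k, (∑ e, U t e k) ^ 2 := by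
      rw [Finset.mul_sum, Finset.mul_sum]
      refine Finset.sum_congr rfl fun k _ => ?_
      field_simp
    rw [hexp]
    rw [div_mul_eq_mul_div, div_le_div_iff₀ hn hn]
    have := mul_le_mul_of_nonneg_right
      (mul_le_mul_of_nonneg_left hsq (sq_nonneg (τ t))) hn.le
    nlinarith [this]
  -- H5: first-order error decomposition
  have H5 : frobIP (Z t) Err
      = (∑ e ∈ S t, (rnorm (X e) ^ 2 - τ t * rnorm (X e)))
        + τ t * frobIP (Z t) (Cb * U t) := by
    rw [hErr, frobIP_add_right, frobIP_smul_right, frobIP_mul, ← hX_def]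
    congr 1
    have hstep : frobIP X (X - clipMat (τ t) X)
        = ∑ e, (if τ t < rnorm (X e) then rnorm (X e) ^ 2 - τ t * rnorm (X e) else 0) := by
      unfold frobIP
      refine Finset.sum_congr rfl fun e _ => ?_
      have : ∀ k, (X - clipMat (τ t) X) e k = X e k - clipVec (τ t) (X e) k := by
        intro k
        simp [clipMat, Matrix.sub_apply]
      rw [Finset.sum_congr rfl fun k _ => by rw [this k]]
      exact clip_inner (hτ t) (X e)
    rw [hstep, hS t, Finset.sum_filter, ← hX_def]
  -- H6: inner product against Cb * M
  have H6 : ∀ M : Matrix Eb (Fin d) ℝ,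
      frobIP (Z t) (Cb * M) = ∑ e, ∑ k, Z t (v0 e) k * M e k := by
    intro M
    rw [frobIP_mul]
    unfold frobIP
    refine Finset.sum_congr rfl fun e _ => Finset.sum_congr rfl fun k _ => ?_
    congr 1
    simp [Matrix.mul_apply, Matrix.transpose_apply, hv0 e, ite_mul, Finset.sum_ite_eq']
  -- H7: Cauchy–Schwarz on the Byzantine term
  have H7 : frobIP (Z t) (Cb * U t) ≤ ∑ e : Eb, rnorm (Z t (v0 e)) := by
    rw [H6]
    refine Finset.sum_le_sum fun e _ => ?_
    calc ∑ k, Z t (v0 e) k * U t e k ≤ rnorm (Z t (v0 e)) * rnorm (U t e) :=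
          inner_le_rnorm _ _
      _ ≤ rnorm (Z t (v0 e)) := mul_le_of_le_one_right (rnorm_nonneg _) (hU t e)
  -- H8: amplification bound via the Byzantine-resilience assumption
  have H8 : ∑ e : Eb, rnorm (Z t (v0 e))
      ≤ Δ * (∑ e, rnorm (X e)) + η * mb ^ 2 / n * ∑ s ∈ Finset.range t, τ s := by
    set U' : Matrix Eb (Fin d) ℝ := Matrix.of fun e =>
      if rnorm (Z t (v0 e)) = 0 then 0 else (rnorm (Z t (v0 e)))⁻¹ • Z t (v0 e) with hU'_def
    have hueq : ∀ e, U' e = if rnorm (Z t (v0 e)) = 0 then 0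
        else (rnorm (Z t (v0 e)))⁻¹ • Z t (v0 e) := fun e => rfl
    have hU'row : ∀ e, rnorm (U' e) ≤ 1 := by
      intro e
      by_cases h : rnorm (Z t (v0 e)) = 0
      · rw [hueq e, if_pos h, rnorm_zero]; norm_num
      · have hpos : 0 < rnorm (Z t (v0 e)) :=
          lt_of_le_of_ne (rnorm_nonneg _) (Ne.symm h)
        rw [hueq e, if_neg h, rnorm_smul, abs_of_nonneg (inv_nonneg.mpr hpos.le),
          inv_mul_cancel₀ h]
    obtain ⟨W, hWeq, hWnorm⟩ := hΔ U' hU'row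
    have hfr : frobIP (Z t) (Cb * U') = ∑ e : Eb, rnorm (Z t (v0 e)) := by
      rw [H6 U']
      refine Finset.sum_congr rfl fun e _ => ?_
      by_cases h : rnorm (Z t (v0 e)) = 0
      · have hz := rnorm_eq_zero h
        simp [hz, h, rnorm_zero]
      · have hup : ∀ k, U' e k = (rnorm (Z t (v0 e)))⁻¹ * Z t (v0 e) k := by
          intro k; rw [hueq e, if_neg h]; rfl
        rw [Finset.sum_congr rfl fun k _ => by rw [hup k]]
        have hss : ∑ k, Z t (v0 e) k * ((rnorm (Z t (v0 e)))⁻¹ * Z t (v0 e) k)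
            = (rnorm (Z t (v0 e)))⁻¹ * ∑ k, (Z t (v0 e) k) ^ 2 := by
          rw [Finset.mul_sum]; exact Finset.sum_congr rfl fun k _ => by ring
        rw [hss, ← sq_rnorm, sq, inv_mul_cancel_left₀ h]
    have hsplit : Cb * U'
        = Ch * W + (1/n) • ((Matrix.of fun (_ _ : V) => (1:ℝ)) * (Cb * U')) := by
      rw [hWeq, Matrix.sub_mul, Matrix.one_mul, Matrix.smul_mul]
      abel
    have hChW : frobIP (Z t) (Ch * W) ≤ Δ * ∑ e, rnorm (X e) := by
      rw [frobIP_mul, ← hX_def]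
      unfold frobIP
      calc ∑ e, ∑ k, X e k * W e k ≤ ∑ e, rnorm (X e) * Δ := by
            refine Finset.sum_le_sum fun e _ => ?_
            calc ∑ k, X e k * W e k ≤ rnorm (X e) * rnorm (W e) := inner_le_rnorm _ _
              _ ≤ rnorm (X e) * Δ :=
                  mul_le_mul_of_nonneg_left (hWnorm e) (rnorm_nonneg _)
        _ = Δ * ∑ e, rnorm (X e) := by rw [← Finset.sum_mul]; ring
    have hbU' : rnorm (fun k => ∑ e, U' e k) ≤ mb := by
      have hfun : (fun k => ∑ e, U' e k) = ∑ e : Eb, U' e := by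
        funext k; rw [Finset.sum_apply k Finset.univ (fun e : Eb => (U' e : Fin d → ℝ))]
      rw [hfun]
      refine le_trans (rnorm_sum_le Finset.univ fun e => U' e) ?_
      calc ∑ e, rnorm (U' e) ≤ ∑ _e : Eb, (1:ℝ) := Finset.sum_le_sum fun e _ => hU'row e
        _ = mb := by simp [hmb_def]
    have hJ : frobIP (Z t) ((Matrix.of fun (_ _ : V) => (1:ℝ)) * (Cb * U'))
        ≤ (η * mb * ∑ s ∈ Finset.range t, τ s) * mb := by
      have hJrow : ∀ (v : V) (k : Fin d),
          ((Matrix.of fun (_ _ : V) => (1:ℝ)) * (Cb * U')) v k = ∑ e, U' e k := by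
        intro v k
        rw [Matrix.mul_apply]
        simp only [Matrix.of_apply, one_mul]
        exact colCbM U' k
      have heq : frobIP (Z t) ((Matrix.of fun (_ _ : V) => (1:ℝ)) * (Cb * U'))
          = ∑ k, (∑ v, Z t v k) * (∑ e, U' e k) := by
        unfold frobIP
        rw [Finset.sum_congr rfl fun v _ => Finset.sum_congr rfl fun k _ => by rw [hJrow v k]]
        rw [Finset.sum_comm]
        refine Finset.sum_congr rfl fun k _ => ?_
        rw [Finset.sum_mul]
      rw [heq]
      have hτsum : (0:ℝ) ≤ ∑ s ∈ Finset.range t, τ s :=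
        Finset.sum_nonneg fun s _ => hτ s
      calc ∑ k, (∑ v, Z t v k) * (∑ e, U' e k)
          ≤ rnorm (fun k => ∑ v, Z t v k) * rnorm (fun k => ∑ e, U' e k) :=
            inner_le_rnorm _ _
        _ ≤ (η * mb * ∑ s ∈ Finset.range t, τ s) * mb := by
            refine mul_le_mul (Fa t) hbU' (rnorm_nonneg _) ?_
            exact mul_nonneg (mul_nonneg hη.le hmb.le) hτsum
    calc ∑ e : Eb, rnorm (Z t (v0 e)) = frobIP (Z t) (Cb * U') := hfr.symm
      _ = frobIP (Z t) (Ch * W)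
          + (1/n) * frobIP (Z t) ((Matrix.of fun (_ _ : V) => (1:ℝ)) * (Cb * U')) := by
          conv_lhs => rw [hsplit]
          rw [frobIP_add_right, frobIP_smul_right]
      _ ≤ Δ * (∑ e, rnorm (X e))
          + (1/n) * ((η * mb * ∑ s ∈ Finset.range t, τ s) * mb) :=
          add_le_add hChW (mul_le_mul_of_nonneg_left hJ (one_div_nonneg.mpr hn.le))
      _ = Δ * (∑ e, rnorm (X e)) + η * mb ^ 2 / n * ∑ s ∈ Finset.range t, τ s := by
          field_simp
  -- H9: the GCR absorbs the Byzantine contribution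
  have H9 : τ t * frobIP (Z t) (Cb * U t) + η * (τ t ^ 2 * mb ^ 2 / n)
      ≤ τ t * ∑ e ∈ S t, rnorm (X e) := by
    rcases hGCRt with h0 | hg
    · rw [h0]; simp
    · have hP : frobIP (Z t) (Cb * U t)
          ≤ Δ * (∑ e, rnorm (X e)) + η * mb ^ 2 / n * ∑ s ∈ Finset.range t, τ s :=
        le_trans H7 H8
      rw [Finset.sum_range_succ, mul_add] at hg
      have key : frobIP (Z t) (Cb * U t) + η * mb ^ 2 / n * τ t
          ≤ ∑ e ∈ S t, rnorm (X e) := by linarith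
      have hkey := mul_le_mul_of_nonneg_left key (hτ t)
      have hfin : τ t * (frobIP (Z t) (Cb * U t) + η * mb ^ 2 / n * τ t)
          = τ t * frobIP (Z t) (Cb * U t) + η * (τ t ^ 2 * mb ^ 2 / n) := by ring
      linarith [hkey]
  -- assemble everything
  have hsplitS : ∑ e ∈ S t, (rnorm (X e) ^ 2 - τ t * rnorm (X e))
      = (∑ e ∈ S t, rnorm (X e) ^ 2) - τ t * ∑ e ∈ S t, rnorm (X e) := by
    rw [Finset.sum_sub_distrib, Finset.mul_sum]
  have h4' := mul_le_mul_of_nonneg_left H4 (sq_nonneg η)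
  have h9' := mul_le_mul_of_nonneg_left H9 hη.le
  rw [show η * frobIP (Z t - Zbar t) Err + frobIP (Zbar t) (Zbar (t+1) - Zbar t)
        + η ^ 2 * frobIP Ebar Ebar
      = (η * frobIP (Z t - Zbar t) Err + frobIP (Zbar t) (Zbar (t+1) - Zbar t))
        + η ^ 2 * frobIP Ebar Ebar from by ring, H3, H5, hsplitS]
  linarith [h4', h9']
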